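/- Let N ≥ 2 and let Ω ⊂ ℝ^N be a bounded open set whose boundary ∂Ω is σ-finite with respect to the ℋ^{N−1} measure. Let u : Ω → ℝ be a Borel function with u ≥ 0, extended to zero outside Ω, and for t > 0 set Ω^t = {x ∈ Ω : u(x) > t}. Then ∫_0^{+∞} ℋ^{N−1}(∂*Ω^t ∩ ∂Ω) dt ≤ ∫_{∂Ω ∩ S(u)} |u⁺(y) − u⁻(y)| dℋ^{N−1}(y). -/

import Mathlib

open MeasureTheory Metric Set Filter Topology ENNReal

noncomputable section

abbrev RN (N : ℕ) := EuclideanSpace ℝ (Fin N)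

/-- `E` has density `t` at `x`. -/
def HasDensityAt {N : ℕ} (E : Set (RN N)) (t : ℝ) (x : RN N) : Prop :=
  Tendsto (fun ρ : ℝ => volume (E ∩ ball x ρ) / volume (ball x ρ))
    (𝓝[>] 0) (𝓝 (ENNReal.ofReal t))

/-- The set of points where `E` has density `t`. -/
def densityPts {N : ℕ} (E : Set (RN N)) (t : ℝ) : Set (RN N) := {x | HasDensityAt E t x}

/-- The essential boundary `∂* E`. -/
def essBoundary {N : ℕ} (E : Set (RN N)) : Set (RN N) :=
  univ \ (densityPts E 0 ∪ densityPts E 1)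

/-- Approximate upper limit `v⁺(x)`. -/
def apUpper {N : ℕ} (v : RN N → ℝ) (x : RN N) : EReal :=
  sInf ((fun t : ℝ => (t : EReal)) '' {t | HasDensityAt {y | v y > t} 0 x})

/-- Approximate lower limit `v⁻(x)`. -/
def apLower {N : ℕ} (v : RN N → ℝ) (x : RN N) : EReal :=
  sSup ((fun t : ℝ => (t : EReal)) '' {t | HasDensityAt {y | v y > t} 1 x})

/-- The approximate discontinuity set `S(v)`. -/
def apDiscont {N : ℕ} (v : RN N → ℝ) : Set (RN N) := {x | apUpper v x ≠ apLower v x}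

/-- Conversion from `EReal` to `ℝ≥0∞`, sending `⊤` to `⊤` and negatives to `0`. -/
def erealToENNReal (x : EReal) : ℝ≥0∞ :=
  if x = ⊤ then ⊤ else ENNReal.ofReal x.toReal

/-- `|v⁺(x) - v⁻(x)|` as an extended nonnegative real. -/
def jumpE {N : ℕ} (v : RN N → ℝ) (x : RN N) : ℝ≥0∞ :=
  erealToENNReal (apUpper v x - apLower v x) ⊔ erealToENNReal (apLower v x - apUpper v x)

/-- Divergence of a vector field. -/
def divg {N : ℕ} (g : RN N → RN N) (x : RN N) : ℝ :=
  ∑ i, fderiv ℝ g x (EuclideanSpace.single i 1) i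

/-- Total variation `|Du|(Ω)`. -/
def totVar {N : ℕ} (u : RN N → ℝ) (Ω : Set (RN N)) : ℝ≥0∞ :=
  ⨆ (g : RN N → RN N) (_ : ContDiff ℝ 1 g) (_ : HasCompactSupport g)
    (_ : tsupport g ⊆ Ω) (_ : ∀ x, ‖g x‖ ≤ 1),
    ENNReal.ofReal (∫ x in Ω, u x * divg g x)

/-- The isoperimetric constant `C(N)`. -/
def isoConst (N : ℕ) : ℝ≥0∞ :=
  volume (ball (0 : RN N) 1) ^ (((N : ℝ) - 1) / N) /
    μH[(N : ℝ) - 1] (sphere (0 : RN N) 1)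

/-- `s` is σ-finite with respect to `μ`. -/
def SigmaFiniteOn {N : ℕ} (μ : Measure (RN N)) (s : Set (RN N)) : Prop :=
  ∃ f : ℕ → Set (RN N), (∀ n, MeasurableSet (f n) ∧ μ (f n) < ⊤) ∧ s = ⋃ n, f n

/-- `v` is the weak (distributional) gradient of `u` on `Ω`. -/
def IsWeakGradOn {N : ℕ} (u : RN N → ℝ) (v : RN N → RN N) (Ω : Set (RN N)) : Prop :=
  ∀ g : RN N → ℝ, ContDiff ℝ 1 g → HasCompactSupport g → tsupport g ⊆ Ω →
    ∀ i : Fin N, ∫ x in Ω, u x * fderiv ℝ g x (EuclideanSpace.single i 1) =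
      -∫ x in Ω, v x i * g x

/-!
For `t > 0` the set `Ω^t` is the superlevel set `{u > t}` (as `u = 0` off `Ω`), and a point of
its essential boundary satisfies `u⁻ ≤ t ≤ u⁺`. Integrating this inclusion over `t` and
exchanging the order of integration (Tonelli, available because `ℋ^{N-1}` is σ-finite on `∂Ω`)
bounds the left-hand side by the integral over `∂Ω` of the length of `[u⁻(y), u⁺(y)]`, which is
`|u⁺(y) - u⁻(y)|` and vanishes off `S(u)`. The joint measurability that Tonelli requires comes
from testing densities only at rational thresholds and rational radii.
-/

lemma measure_inter_ball_eq_iSup_rat {α : Type*} [PseudoMetricSpace α] [MeasurableSpace α]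
    (μ : Measure α) (E : Set α) (x : α) (ρ : ℝ) :
    μ (E ∩ ball x ρ) = ⨆ q : {q : ℚ // 0 < (q : ℝ) ∧ (q : ℝ) < ρ}, μ (E ∩ ball x q) := by
  have hunion : E ∩ ball x ρ = ⋃ q : {q : ℚ // 0 < (q : ℝ) ∧ (q : ℝ) < ρ}, E ∩ ball x q := by
    refine Subset.antisymm (fun y ⟨hyE, hy⟩ => ?_)
      (iUnion_subset fun q => inter_subset_inter_right _ (ball_subset_ball q.2.2.le))
    obtain ⟨q, hq, hqρ⟩ := exists_rat_btwn (mem_ball.1 hy)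
    exact mem_iUnion.2 ⟨⟨q, dist_nonneg.trans_lt hq, hqρ⟩, hyE, hq⟩
  rw [hunion]
  refine Monotone.measure_iUnion fun q r hqr => inter_subset_inter_right _ (ball_subset_ball ?_)
  exact_mod_cast hqr

lemma measurable_measure_inter_ball {α : Type*} [PseudoMetricSpace α] [MeasurableSpace α]
    [OpensMeasurableSpace α] [SecondCountableTopology α] (μ : Measure α) [SFinite μ]
    {E : Set α} (hE : MeasurableSet E) (r : ℝ) :
    Measurable fun x => μ (E ∩ ball x r) := by
  have hS : MeasurableSet {p : α × α | p.2 ∈ E ∧ dist p.2 p.1 < r} :=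
    (measurable_snd hE).inter
      (measurableSet_lt (continuous_snd.dist continuous_fst).measurable measurable_const)
  exact measurable_measure_prodMk_left hS

section Density

variable {N : ℕ}

def densityRatio (E : Set (RN N)) (x : RN N) (ρ : ℝ) : ℝ≥0∞ :=
  volume (E ∩ ball x ρ) / volume (ball x ρ)

lemma densityRatio_le_one (E : Set (RN N)) (x : RN N) (ρ : ℝ) : densityRatio E x ρ ≤ 1 :=
  ENNReal.div_le_of_le_mul (by simpa using measure_mono inter_subset_right)

lemma densityRatio_mono {E F : Set (RN N)} (h : E ⊆ F) (x : RN N) (ρ : ℝ) :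
    densityRatio E x ρ ≤ densityRatio F x ρ :=
  ENNReal.div_le_div_right (measure_mono (inter_subset_inter_left _ h)) _

lemma HasDensityAt.zero_of_subset {E F : Set (RN N)} {x : RN N} (hF : HasDensityAt F 0 x)
    (h : E ⊆ F) : HasDensityAt E 0 x := by
  rw [HasDensityAt, ENNReal.ofReal_zero] at *
  exact tendsto_of_tendsto_of_tendsto_of_le_of_le tendsto_const_nhds hF (fun _ => zero_le)
    (densityRatio_mono h x)

lemma HasDensityAt.one_of_subset {E F : Set (RN N)} {x : RN N} (hE : HasDensityAt E 1 x)
    (h : E ⊆ F) : HasDensityAt F 1 x := by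
  rw [HasDensityAt, ENNReal.ofReal_one] at *
  exact tendsto_of_tendsto_of_tendsto_of_le_of_le hE tendsto_const_nhds (densityRatio_mono h x)
    (densityRatio_le_one F x)

lemma densityRatio_mem_Icc_of_forall_rat {E : Set (RN N)} {x : RN N} {ρ : ℝ} (hρ : 0 < ρ)
    {a b : ℝ≥0∞} (h : ∀ q : ℚ, 0 < (q : ℝ) → (q : ℝ) < ρ → densityRatio E x q ∈ Icc a b) :
    densityRatio E x ρ ∈ Icc a b := by
  have hball : ∀ r : ℝ, 0 < r → volume (ball x r) ≠ 0 ∧ volume (ball x r) ≠ ⊤ :=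
    fun r hr => ⟨(measure_ball_pos volume x hr).ne', measure_ball_lt_top.ne⟩
  have hq (q : {q : ℚ // 0 < (q : ℝ) ∧ (q : ℝ) < ρ}) := h q q.2.1 q.2.2
  simp only [densityRatio, mem_Icc] at hq ⊢
  have hvol := measure_inter_ball_eq_iSup_rat volume univ x ρ
  simp only [univ_inter] at hvol
  constructor
  · rw [ENNReal.le_div_iff_mul_le (.inl (hball ρ hρ).1) (.inl (hball ρ hρ).2), hvol,
      ENNReal.mul_iSup]
    refine iSup_le fun q => ?_
    calc a * volume (ball x q) ≤ volume (E ∩ ball x q) :=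
          (ENNReal.le_div_iff_mul_le (.inl (hball q q.2.1).1) (.inl (hball q q.2.1).2)).1 (hq q).1
      _ ≤ volume (E ∩ ball x ρ) :=
          measure_mono (inter_subset_inter_right _ (ball_subset_ball q.2.2.le))
  · rw [ENNReal.div_le_iff_le_mul (.inl (hball ρ hρ).1) (.inl (hball ρ hρ).2),
      measure_inter_ball_eq_iSup_rat]
    refine iSup_le fun q => ?_
    calc volume (E ∩ ball x q) ≤ b * volume (ball x q) :=
          (ENNReal.div_le_iff_le_mul (.inl (hball q q.2.1).1) (.inl (hball q q.2.1).2)).1 (hq q).2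
      _ ≤ b * volume (ball x ρ) := by gcongr; exact q.2.2.le

lemma hasDensityAt_iff_tendsto_rat {E : Set (RN N)} {c : ℝ} {x : RN N} :
    HasDensityAt E c x ↔ Tendsto (fun q : ℚ => densityRatio E x q)
      (comap ((↑) : ℚ → ℝ) (𝓝[>] 0)) (𝓝 (ENNReal.ofReal c)) := by
  refine ⟨fun h => h.comp tendsto_comap, fun h => ?_⟩
  rw [HasDensityAt, ENNReal.tendsto_nhds ENNReal.ofReal_ne_top]
  intro ε hε
  obtain ⟨s, hs, hsub⟩ := mem_comap.1 ((ENNReal.tendsto_nhds ENNReal.ofReal_ne_top).1 h ε hε)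
  obtain ⟨δ, hδ, hδs⟩ := mem_nhdsGT_iff_exists_Ioo_subset.1 hs
  filter_upwards [Ioo_mem_nhdsGT hδ] with ρ hρ
  exact densityRatio_mem_Icc_of_forall_rat hρ.1
    fun q hq hqρ => hsub (hδs ⟨hq, hqρ.trans hρ.2⟩)

lemma measurable_densityRatio {E : Set (RN N)} (hE : MeasurableSet E) (r : ℝ) :
    Measurable fun x => densityRatio E x r := by
  have hball := measurable_measure_inter_ball (volume : Measure (RN N)) MeasurableSet.univ r
  simp only [univ_inter] at hball
  exact (measurable_measure_inter_ball volume hE r).div hball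

lemma measurableSet_hasDensityAt {E : Set (RN N)} (hE : MeasurableSet E) (c : ℝ) :
    MeasurableSet {x | HasDensityAt E c x} := by
  simp_rw [hasDensityAt_iff_tendsto_rat]
  exact measurableSet_tendsto _ fun q => measurable_densityRatio hE q

end Density

open Classical in
lemma IsUpperSet.sInf_image_coe_eq_iInf_rat {S : Set ℝ} (hS : IsUpperSet S) :
    sInf (((↑) : ℝ → EReal) '' S) = ⨅ q : ℚ, if (q : ℝ) ∈ S then ((q : ℝ) : EReal) else ⊤ := by
  refine le_antisymm (le_iInf fun q => ?_) (le_sInf ?_)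
  · split_ifs with hq
    · exact sInf_le (mem_image_of_mem _ hq)
    · exact le_top
  · rintro _ ⟨t, ht, rfl⟩
    by_contra! hlt
    obtain ⟨q, htq, hq⟩ := EReal.exists_rat_btwn_of_lt hlt
    have hqS : (q : ℝ) ∈ S := hS (EReal.coe_lt_coe_iff.1 htq).le ht
    have hle := iInf_le (fun q : ℚ => if (q : ℝ) ∈ S then ((q : ℝ) : EReal) else ⊤) q
    rw [if_pos hqS] at hle
    exact hq.not_ge hle

open Classical in
lemma IsLowerSet.sSup_image_coe_eq_iSup_rat {S : Set ℝ} (hS : IsLowerSet S) :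
    sSup (((↑) : ℝ → EReal) '' S) = ⨆ q : ℚ, if (q : ℝ) ∈ S then ((q : ℝ) : EReal) else ⊥ := by
  refine le_antisymm (sSup_le ?_) (iSup_le fun q => ?_)
  · rintro _ ⟨t, ht, rfl⟩
    by_contra! hlt
    obtain ⟨q, hq, hqt⟩ := EReal.exists_rat_btwn_of_lt hlt
    have hqS : (q : ℝ) ∈ S := hS (EReal.coe_lt_coe_iff.1 hqt).le ht
    have hle := le_iSup (fun q : ℚ => if (q : ℝ) ∈ S then ((q : ℝ) : EReal) else ⊥) q
    rw [if_pos hqS] at hle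
    exact hq.not_ge hle
  · split_ifs with hq
    · exact le_sSup (mem_image_of_mem _ hq)
    · exact bot_le

lemma volume_preimage_coe_singleton (a : EReal) : volume (((↑) : ℝ → EReal) ⁻¹' {a}) = 0 :=
  (subsingleton_singleton.preimage EReal.coe_injective).measure_zero _

lemma volume_preimage_coe_Icc_le (a b : EReal) :
    volume (((↑) : ℝ → EReal) ⁻¹' Icc a b) ≤ erealToENNReal (b - a) := by
  induction a <;> induction b <;>
    simp [erealToENNReal, ← EReal.coe_sub, volume_preimage_coe_singleton]

section ApproximateLimits

variable {N : ℕ}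

lemma isUpperSet_hasDensityAt_zero_superlevel (v : RN N → ℝ) (x : RN N) :
    IsUpperSet {t : ℝ | HasDensityAt {y | v y > t} 0 x} :=
  fun _ _ hst hs => hs.zero_of_subset fun _ hy => hst.trans_lt hy

lemma isLowerSet_hasDensityAt_one_superlevel (v : RN N → ℝ) (x : RN N) :
    IsLowerSet {t : ℝ | HasDensityAt {y | v y > t} 1 x} :=
  fun _ _ hst hs => hs.one_of_subset fun _ hy => hst.trans_lt hy

open Classical in
lemma apUpper_eq_iInf_rat (v : RN N → ℝ) (x : RN N) :
    apUpper v x = ⨅ q : ℚ, if HasDensityAt {y | v y > q} 0 x then ((q : ℝ) : EReal) else ⊤ :=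
  (isUpperSet_hasDensityAt_zero_superlevel v x).sInf_image_coe_eq_iInf_rat

open Classical in
lemma apLower_eq_iSup_rat (v : RN N → ℝ) (x : RN N) :
    apLower v x = ⨆ q : ℚ, if HasDensityAt {y | v y > q} 1 x then ((q : ℝ) : EReal) else ⊥ :=
  (isLowerSet_hasDensityAt_one_superlevel v x).sSup_image_coe_eq_iSup_rat

lemma measurable_apUpper {v : RN N → ℝ} (hv : Measurable v) : Measurable (apUpper v) := by
  rw [funext (apUpper_eq_iInf_rat v)]
  exact .iInf fun q => .ite (measurableSet_hasDensityAt (measurableSet_lt measurable_const hv) 0)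
    measurable_const measurable_const

lemma measurable_apLower {v : RN N → ℝ} (hv : Measurable v) : Measurable (apLower v) := by
  rw [funext (apLower_eq_iSup_rat v)]
  exact .iSup fun q => .ite (measurableSet_hasDensityAt (measurableSet_lt measurable_const hv) 1)
    measurable_const measurable_const

lemma measurableSet_apDiscont {v : RN N → ℝ} (hv : Measurable v) : MeasurableSet (apDiscont v) :=
  (measurableSet_eq_fun (measurable_apUpper hv) (measurable_apLower hv)).compl

lemma essBoundary_superlevel_subset (v : RN N → ℝ) (t : ℝ) :
    essBoundary {y | v y > t} ⊆ {x | ((↑) : ℝ → EReal) t ∈ Icc (apLower v x) (apUpper v x)} := by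
  rintro x ⟨-, hx⟩
  simp only [densityPts, mem_union, mem_ofPred_eq, not_or] at hx
  refine ⟨sSup_le ?_, le_sInf ?_⟩
  · rintro _ ⟨s, hs, rfl⟩
    exact EReal.coe_le_coe_iff.2
      (not_lt.1 fun hts => hx.2 (isLowerSet_hasDensityAt_one_superlevel v x hts.le hs))
  · rintro _ ⟨s, hs, rfl⟩
    exact EReal.coe_le_coe_iff.2
      (not_lt.1 fun hst => hx.1 (isUpperSet_hasDensityAt_zero_superlevel v x hst.le hs))

lemma volume_preimage_coe_Icc_apLower_apUpper_le (v : RN N → ℝ) (x : RN N) :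
    volume (((↑) : ℝ → EReal) ⁻¹' Icc (apLower v x) (apUpper v x)) ≤
      (apDiscont v).indicator (jumpE v) x := by
  by_cases hx : x ∈ apDiscont v
  · rw [indicator_of_mem hx]
    exact (volume_preimage_coe_Icc_le _ _).trans le_sup_left
  · rw [indicator_of_notMem hx, show apUpper v x = apLower v x from not_not.1 hx, Icc_self]
    exact (volume_preimage_coe_singleton _).le

end ApproximateLimits

lemma SigmaFiniteOn.sigmaFinite_restrict {N : ℕ} {μ : Measure (RN N)} {s : Set (RN N)}
    (hs : SigmaFiniteOn μ s) : SigmaFinite (μ.restrict s) := by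
  obtain ⟨f, hf, rfl⟩ := hs
  have hU : MeasurableSet (⋃ n, f n) := .iUnion fun n => (hf n).1
  refine Measure.sigmaFinite_of_countable (S := insert (⋃ n, f n)ᶜ (range f))
    ((countable_range f).insert _) ?_ ?_
  · rintro _ (rfl | ⟨n, rfl⟩)
    · rw [Measure.restrict_apply hU.compl, compl_inter_self, measure_empty]
      exact zero_lt_top
    · exact (Measure.restrict_apply_le _ _).trans_lt (hf n).2
  · rw [sUnion_insert, sUnion_range, compl_union_self]

theorem boundary_coarea_estimate_general (N : ℕ) (Ω : Set (RN N))
    (hσ : SigmaFiniteOn μH[(N : ℝ) - 1] (frontier Ω))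
    (u : RN N → ℝ) (hum : Measurable u) (hu0 : ∀ x ∉ Ω, u x = 0) :
    (∫⁻ t in Ioi (0 : ℝ),
        μH[(N : ℝ) - 1] (essBoundary {x ∈ Ω | t < u x} ∩ frontier Ω)) ≤
      ∫⁻ y in frontier Ω ∩ apDiscont u, jumpE u y ∂μH[(N : ℝ) - 1] := by
  set μ : Measure (RN N) := μH[(N : ℝ) - 1]
  have : SigmaFinite (μ.restrict (frontier Ω)) := hσ.sigmaFinite_restrict
  set M : Set (ℝ × RN N) := {p | ((↑) : ℝ → EReal) p.1 ∈ Icc (apLower u p.2) (apUpper u p.2)}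
  have hM : MeasurableSet M :=
    (measurableSet_le ((measurable_apLower hum).comp measurable_snd) (by fun_prop)).inter
      (measurableSet_le (by fun_prop) ((measurable_apUpper hum).comp measurable_snd))
  have hsuperlevel : ∀ t > (0 : ℝ), {x ∈ Ω | t < u x} = {x | u x > t} := fun t ht => by
    ext x
    refine ⟨And.right, fun hx => ⟨by_contra fun hxΩ => ?_, hx⟩⟩
    exact (ht.trans hx).ne' (hu0 x hxΩ)
  calc ∫⁻ t in Ioi 0, μ (essBoundary {x ∈ Ω | t < u x} ∩ frontier Ω)
      ≤ ∫⁻ t in Ioi 0, μ.restrict (frontier Ω) (Prod.mk t ⁻¹' M) := by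
        refine setLIntegral_mono (measurable_measure_prodMk_left hM) fun t ht => ?_
        rw [hsuperlevel t ht]
        exact (measure_mono (inter_subset_inter_left _ (essBoundary_superlevel_subset u t))).trans
          (Measure.le_restrict_apply _ _)
    _ = ∫⁻ y in frontier Ω, volume.restrict (Ioi 0) ((·, y) ⁻¹' M) ∂μ := by
        rw [← Measure.prod_apply hM, Measure.prod_apply_symm hM]
    _ ≤ ∫⁻ y in frontier Ω, (apDiscont u).indicator (jumpE u) y ∂μ :=
        lintegral_mono fun y => (Measure.restrict_apply_le _ _).trans
          (volume_preimage_coe_Icc_apLower_apUpper_le u y)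
    _ = ∫⁻ y in frontier Ω ∩ apDiscont u, jumpE u y ∂μ := by
        rw [lintegral_indicator (measurableSet_apDiscont hum), Measure.restrict_restrict
          (measurableSet_apDiscont hum), inter_comm]

/-- Coarea-type estimate on the boundary: the integral over `t > 0` of
`ℋ^{N-1}(∂*Ω^t ∩ ∂Ω)` is bounded by the jump integral over `∂Ω ∩ S(u)`. -/
theorem boundary_coarea_estimate (N : ℕ) (hN : 2 ≤ N) (Ω : Set (RN N))
    (hΩo : IsOpen Ω) (hΩb : Bornology.IsBounded Ω)
    (hσ : SigmaFiniteOn μH[(N : ℝ) - 1] (frontier Ω))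
    (u : RN N → ℝ) (hum : Measurable u) (hu0 : ∀ x ∉ Ω, u x = 0)
    (hpos : ∀ x ∈ Ω, 0 ≤ u x) :
    (∫⁻ t in Ioi (0 : ℝ),
        μH[(N : ℝ) - 1] (essBoundary {x ∈ Ω | t < u x} ∩ frontier Ω)) ≤
      ∫⁻ y in frontier Ω ∩ apDiscont u, jumpE u y ∂μH[(N : ℝ) - 1] :=
  boundary_coarea_estimate_general N Ω hσ u hum hu0
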